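/- arXiv:1503.06176 — 2 statements merged into one kernel-verified Lean document; each statement's English description precedes it below -/
import Mathlib

section
/- Let m ≥ 1 and let Q(λ) = a_0 + a_1 λ + ... + a_{m-1} λ^{m-1} be a polynomial with nonnegative integer coefficients such that every coefficient of M(λ) = 1 + λ^m + (1+λ)Q(λ) is even. Then every coefficient κ_k of M(λ), for k = 0, ..., m, is positive; in particular κ_k ≥ 2 for all k, so M(1) ≥ 2(m+1). -/
open Polynomial Finset

/-- If `Q(λ) = a₀ + a₁λ + ⋯ + a_{m-1}λ^{m-1}` has nonnegative integer
coefficients and every coefficient of `M(λ) = 1 + λ^m + (1+λ)·Q(λ)` is even, then every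
coefficient `κ_k = M.coeff k` for `k ≤ m` is positive, in fact `κ_k ≥ 2`, so
`M(1) ≥ 2(m+1)`. -/
theorem morse_polynomial_coeffs_positive (m : ℕ) (hm : 1 ≤ m) (a : ℕ → ℕ)
    (Q : Polynomial ℕ) (hQ : Q = ∑ i ∈ range m, C (a i) * X ^ i)
    (M : Polynomial ℕ) (hM : M = 1 + X ^ m + (1 + X) * Q)
    (heven : ∀ k, Even (M.coeff k)) :
    (∀ k ≤ m, 0 < M.coeff k) ∧ (∀ k ≤ m, 2 ≤ M.coeff k) ∧ 2 * (m + 1) ≤ M.eval 1 := by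
  have qc : ∀ k, Q.coeff k = if k < m then a k else 0 := by
    intro k
    subst hQ
    rw [finset_sum_coeff]
    simp only [coeff_C_mul, coeff_X_pow, mul_ite, mul_one, mul_zero]
    rw [Finset.sum_ite_eq (range m) k a]
    simp [Finset.mem_range]
  have hc0 : M.coeff 0 = 1 + Q.coeff 0 := by
    subst hM
    have hm0 : m ≠ 0 := by omega
    simp [coeff_one, coeff_X_pow, mul_coeff_zero, Ne.symm hm0]
  have hck : ∀ k, M.coeff (k + 1) =
      (if k + 1 = m then 1 else 0) + (Q.coeff (k + 1) + Q.coeff k) := by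
    intro k
    subst hM
    rw [coeff_add, coeff_add, add_mul, coeff_add, one_mul, coeff_X_mul]
    simp [coeff_one, coeff_X_pow]
  -- all a k odd for k < m
  have hodd : ∀ k < m, Odd (Q.coeff k) := by
    intro k
    induction k with
    | zero =>
      intro _
      have := heven 0
      rw [hc0] at this
      rcases this with ⟨c, hc⟩
      exact ⟨c - 1, by omega⟩
    | succ n ih =>
      intro hn
      have hn' : n < m := by omega
      have hOn := ih hn'
      have := heven (n + 1)
      rw [hck n] at this
      rcases this with ⟨c, hc⟩
      rcases hOn with ⟨d, hd⟩
      rw [if_neg (by omega : ¬ (n + 1 = m))] at hc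
      exact ⟨c - d - 1, by omega⟩
  have hge2 : ∀ k ≤ m, 2 ≤ M.coeff k := by
    intro k hk
    match k with
    | 0 =>
      rw [hc0]
      rcases hodd 0 hm with ⟨d, hd⟩
      omega
    | n + 1 =>
      rw [hck n]
      rcases hodd n (by omega) with ⟨d, hd⟩
      by_cases h : m = n + 1
      · simp [h]; omega
      · rcases hodd (n + 1) (by omega) with ⟨e, he⟩
        simp [h]; omega
  refine ⟨fun k hk => by have := hge2 k hk; omega, hge2, ?_⟩
  have hQe : Q.eval 1 = ∑ i ∈ range m, a i := by
    subst hQ; simp [eval_finset_sum]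
  have hMe : M.eval 1 = 2 + 2 * Q.eval 1 := by
    subst hM
    simp only [eval_add, eval_mul, eval_one, eval_pow, eval_X, one_pow]
    ring
  have : m ≤ ∑ i ∈ range m, a i := by
    calc m = ∑ _i ∈ range m, 1 := by simp
    _ ≤ ∑ i ∈ range m, a i := by
        apply Finset.sum_le_sum
        intro i hi
        rcases hodd i (Finset.mem_range.mp hi) with ⟨d, hd⟩
        rw [qc i, if_pos (Finset.mem_range.mp hi)] at hd
        omega
  rw [hMe, hQe]
  omega
end

section
/- Let L > 0, Λ, K ∈ ℝ with 1 − 4Λ⁺L − 4K⁺L² > 0. Let u : [0,L] → ℝ be piecewise C¹ with u(L) = 0 and u not identically zero. Then −Λ u(0)² + ∫_0^L (u'(s)² − K u(s)²) ds > 0. -/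
open MeasureTheory intervalIntegral

/-- Cauchy–Schwarz for interval integrals: `(∫ v)² ≤ (b-a) ∫ v²`. -/
lemma cs_interval (a b : ℝ) (hab : a ≤ b) (v : ℝ → ℝ)
    (hv : IntervalIntegrable v volume a b)
    (hv2 : IntervalIntegrable (fun s => v s ^ 2) volume a b) :
    (∫ s in a..b, v s) ^ 2 ≤ (b - a) * ∫ s in a..b, v s ^ 2 := by
  rcases eq_or_lt_of_le hab with rfl | hlt
  · simp
  have hm0 : 0 < b - a := by linarith
  set A := ∫ s in a..b, v s with hA
  set c : ℝ := A / (b - a) with hc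
  have h0 : 0 ≤ ∫ s in a..b, (v s - c) ^ 2 :=
    intervalIntegral.integral_nonneg hab fun s _ => sq_nonneg _
  have hexp : ∫ s in a..b, (v s - c) ^ 2
      = (∫ s in a..b, v s ^ 2) - 2 * c * A + c ^ 2 * (b - a) := by
    have h1 : (fun s => (v s - c) ^ 2)
        = fun s => (v s ^ 2 - 2 * c * v s) + c ^ 2 := by
      funext s; ring
    rw [h1, intervalIntegral.integral_add (hv2.sub (hv.const_mul (2 * c)))
      intervalIntegrable_const,
      intervalIntegral.integral_sub hv2 (hv.const_mul (2 * c)),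
      intervalIntegral.integral_const_mul, intervalIntegral.integral_const]
    simp [smul_eq_mul]
    ring
  have hcm : c * (b - a) = A := div_mul_cancel₀ _ hm0.ne'
  have key : 0 ≤ (∫ s in a..b, v s ^ 2) - 2 * c * A + c ^ 2 * (b - a) := hexp ▸ h0
  nlinarith [key, hcm, hm0, sq_nonneg (c * (b - a))]

/-- scalar model of positivity of the index form: if
`1 − 4Λ⁺L − 4K⁺L² > 0` and `u` is piecewise `C¹` on `[0,L]` with `u L = 0`
(modelled by `u t = -∫_t^L v` for an interval-integrable derivative `v`) and `u` is not
identically zero on `[0,L]`, then `−Λ·u(0)² + ∫_0^L (v² − K·u²) > 0`. -/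
theorem index_form_positive (L Λ K : ℝ) (hL : 0 < L)
    (hcond : 0 < 1 - 4 * max Λ 0 * L - 4 * max K 0 * L ^ 2)
    (u v : ℝ → ℝ)
    (hv : IntervalIntegrable v volume 0 L)
    (hv2 : IntervalIntegrable (fun s => v s ^ 2) volume 0 L)
    (hu : ∀ t ∈ Set.Icc (0 : ℝ) L, u t = -∫ s in t..L, v s)
    (hne : ∃ t ∈ Set.Icc (0 : ℝ) L, u t ≠ 0) :
    0 < -Λ * u 0 ^ 2 + ∫ s in (0 : ℝ)..L, (v s ^ 2 - K * u s ^ 2) := by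
  have hL0 : (0 : ℝ) ≤ L := hL.le
  set I : ℝ := ∫ s in (0 : ℝ)..L, v s ^ 2 with hI
  have hInn : 0 ≤ I :=
    intervalIntegral.integral_nonneg hL0 fun s _ => sq_nonneg _
  -- integrability on subintervals
  have hsubIcc : ∀ t ∈ Set.Icc (0 : ℝ) L,
      Set.uIcc t L ⊆ Set.uIcc (0 : ℝ) L := by
    intro t ht
    rw [Set.uIcc_of_le ht.2, Set.uIcc_of_le hL0]
    exact Set.Icc_subset_Icc ht.1 le_rfl
  have hsubIcc0 : ∀ t ∈ Set.Icc (0 : ℝ) L,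
      Set.uIcc (0 : ℝ) t ⊆ Set.uIcc (0 : ℝ) L := by
    intro t ht
    rw [Set.uIcc_of_le ht.1, Set.uIcc_of_le hL0]
    exact Set.Icc_subset_Icc le_rfl ht.2
  -- tail integrals of v² are bounded by I
  have htail : ∀ t ∈ Set.Icc (0 : ℝ) L, (∫ s in t..L, v s ^ 2) ≤ I := by
    intro t ht
    have h1 : IntervalIntegrable (fun s => v s ^ 2) volume 0 t :=
      hv2.mono_set (hsubIcc0 t ht)
    have h2 : IntervalIntegrable (fun s => v s ^ 2) volume t L :=
      hv2.mono_set (hsubIcc t ht)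
    have hadd := intervalIntegral.integral_add_adjacent_intervals h1 h2
    have hpos : 0 ≤ ∫ s in (0 : ℝ)..t, v s ^ 2 :=
      intervalIntegral.integral_nonneg ht.1 fun s _ => sq_nonneg _
    rw [hI]
    linarith [hadd]
  -- pointwise bound u t ^ 2 ≤ L * I on [0, L]
  have hbound : ∀ t ∈ Set.Icc (0 : ℝ) L, u t ^ 2 ≤ L * I := by
    intro t ht
    have hcs := cs_interval t L ht.2 v (hv.mono_set (hsubIcc t ht))
      (hv2.mono_set (hsubIcc t ht))
    have hut : u t ^ 2 = (∫ s in t..L, v s) ^ 2 := by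
      rw [hu t ht]; ring
    have htail' := htail t ht
    have htn : 0 ≤ ∫ s in t..L, v s ^ 2 :=
      intervalIntegral.integral_nonneg ht.2 fun s _ => sq_nonneg _
    have h1 : (L - t) * (∫ s in t..L, v s ^ 2) ≤ L * I :=
      mul_le_mul (by linarith [ht.1]) htail' htn hL0
    rw [hut]; linarith
  -- integrability of u² on [0, L]
  have hFc : ContinuousOn (fun t => (∫ s in t..L, v s) ^ 2) (Set.uIcc (0 : ℝ) L) := by
    have h1 : ContinuousOn (fun t => ∫ s in L..t, v s) (Set.uIcc (0 : ℝ) L) :=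
      intervalIntegral.continuousOn_primitive_interval' hv
        (by rw [Set.uIcc_of_le hL0]; exact Set.right_mem_Icc.2 hL0)
    have h2 : ContinuousOn (fun t => ∫ s in t..L, v s) (Set.uIcc (0 : ℝ) L) := by
      have : (fun t => ∫ s in t..L, v s) = fun t => -∫ s in L..t, v s := by
        funext t; rw [intervalIntegral.integral_symm]
      rw [this]; exact h1.neg
    exact h2.pow 2
  have hgint : IntervalIntegrable (fun t => (∫ s in t..L, v s) ^ 2) volume 0 L :=
    hFc.intervalIntegrable
  have hu2int : IntervalIntegrable (fun s => u s ^ 2) volume 0 L := by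
    apply hgint.congr
    intro s hs; dsimp only
    have hs' : s ∈ Set.Icc (0 : ℝ) L := by
      rw [Set.uIoc_of_le hL0] at hs
      exact ⟨hs.1.le, hs.2⟩
    rw [hu s hs']; ring
  set J : ℝ := ∫ s in (0 : ℝ)..L, u s ^ 2 with hJ
  have hJnn : 0 ≤ J :=
    intervalIntegral.integral_nonneg hL0 fun s _ => sq_nonneg _
  have hJle : J ≤ L ^ 2 * I := by
    have h1 : J ≤ ∫ _s in (0 : ℝ)..L, L * I :=
      intervalIntegral.integral_mono_on hL0 hu2int intervalIntegrable_const hbound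
    rw [intervalIntegral.integral_const, smul_eq_mul] at h1
    nlinarith [h1]
  -- positivity of I
  obtain ⟨t0, ht0, hne0⟩ := hne
  have hIpos : 0 < I := by
    have h1 : 0 < u t0 ^ 2 := by positivity
    nlinarith [hbound t0 ht0, hL]
  -- split the integral
  have hsplit : (∫ s in (0 : ℝ)..L, (v s ^ 2 - K * u s ^ 2)) = I - K * J := by
    rw [hI, hJ, ← intervalIntegral.integral_const_mul,
      ← intervalIntegral.integral_sub hv2 (hu2int.const_mul K)]
  rw [hsplit]
  -- final arithmetic
  have hu0 := hbound 0 (Set.left_mem_Icc.2 hL0)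
  have hu0nn : 0 ≤ u 0 ^ 2 := sq_nonneg _
  have hΛ : Λ ≤ max Λ 0 := le_max_left _ _
  have hΛ0 : 0 ≤ max Λ 0 := le_max_right _ _
  have hK : K ≤ max K 0 := le_max_left _ _
  have hK0 : 0 ≤ max K 0 := le_max_right _ _
  nlinarith [mul_le_mul_of_nonneg_right hΛ hu0nn,
    mul_le_mul_of_nonneg_right hK hJnn,
    mul_le_mul_of_nonneg_left hu0 hΛ0,
    mul_le_mul_of_nonneg_left hJle hK0,
    mul_pos hIpos hcond, mul_nonneg hΛ0 hL0,
    mul_nonneg (mul_nonneg hK0 hL0) hL0, hIpos, hInn]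
end
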